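/- arXiv:1907.09510 — 2 statements merged into one kernel-verified Lean document; each statement's English description precedes it below -/
import Mathlib

section
/- Let $C = C_0 \oplus C_+$ be a $\mathbb{Z}$-graded module over a commutative ring with a degree $1$ map $d$ that decomposes as $d = d_0 + d_+ + d_{+,0}$ (where $d_0 : C_0 \to C_0$, $d_+ : C_+ \to C_+$, $d_{+,0} : C_+ \to C_0$, all of degree $1$, and there is no component $C_0 \to C_+$), and a degree $-1$ map $\Delta = \Delta_+ + \Delta_{+,0}$ (with $\Delta_+ : C_+ \to C_+$, $\Delta_{+,0} : C_+ \to C_0$). Assume $d^2 = 0$ and $\Delta \circ d + d \circ \Delta = 0$. Then the assignment $x \mapsto [\Delta_{+,0}(x) - d_{+,0}(b)]$, where $x \in C_+$ satisfies $d_+ x = 0$ and $b \in C_+$ satisfies $\Delta_+ x = d_+ b$, induces a well-defined degree $-1$ map $\phi : \ker\big(\Delta_+ : H^*(C_+, d_+) \to H^{*-1}(C_+, d_+)\big) \to \operatorname{coker}\big(\delta : H^{*-2}(C_+, d_+) \to H^{*-1}(C_0, d_0)\big)$, where $\delta$ is the map induced by $d_{+,0}$; that is, $d_0(\Delta_{+,0}(x)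 - d_{+,0}(b)) = 0$, the class is independent of the choice of $b$ with $\Delta_+ x = d_+ b$, and replacing $x$ by $x + d_+ y$ changes the representative by an element of $\operatorname{im} d_0 + \operatorname{im} d_{+,0}|_{\ker d_+}$. -/
/-!
Comparing components of `d² = 0` and `Δd + dΔ = 0` gives
`d₀ d₊₀ = -d₊₀ d₊`, `d₀ Δ₊₀ + d₊₀ Δ₊ = -Δ₊₀ d₊` and `d₊ Δ₊ = -Δ₊ d₊`.
For a `d₊`-cycle `x` with `d₊ b = Δ₊ x` the first two give
`d₀ (Δ₊₀ x - d₊₀ b) = -d₊₀ Δ₊ x + d₊₀ d₊ b = 0`. Two choices of `b` differ by a `d₊`-cycle.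
Replacing `x` by `x + d₊ y`, the third shows that `b - b' - Δ₊ y` is a `d₊`-cycle, and the second
rewrites `Δ₊₀ d₊ y` as `-d₀ Δ₊₀ y - d₊₀ Δ₊ y`.
-/

section StructureMap

variable {R : Type*} [Semiring R] {C0 Cp : ℤ → Type*}
    [∀ n, AddCommGroup (C0 n)] [∀ n, Module R (C0 n)]
    [∀ n, AddCommGroup (Cp n)] [∀ n, Module R (Cp n)]
    (d0 : ∀ n, C0 n →ₗ[R] C0 (n + 1)) (dp : ∀ n, Cp n →ₗ[R] Cp (n + 1))
    (dpo : ∀ n, Cp n →ₗ[R] C0 (n + 1))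
    (Δp : ∀ n, Cp (n + 1) →ₗ[R] Cp n) (Δpo : ∀ n, Cp (n + 1) →ₗ[R] C0 n)

theorem d0_Δpo_sub_dpo_eq_zero
    (hd0dpo : ∀ n (x : Cp n), d0 (n + 1) (dpo n x) + dpo (n + 1) (dp n x) = 0)
    (hΔpo : ∀ n (x : Cp (n + 1)),
      Δpo (n + 1) (dp (n + 1) x) + (d0 n (Δpo n x) + dpo n (Δp n x)) = 0)
    {n : ℤ} {x : Cp (n + 1 + 1)} {b : Cp n}
    (hx : dp (n + 1 + 1) x = 0) (hb : dp n b = Δp (n + 1) x) :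
    d0 (n + 1) (Δpo (n + 1) x - dpo n b) = 0 := by
  have hΔx : d0 (n + 1) (Δpo (n + 1) x) = -dpo (n + 1) (Δp (n + 1) x) := by
    simpa [hx, add_eq_zero_iff_eq_neg] using hΔpo (n + 1) x
  have hdb : d0 (n + 1) (dpo n b) = -dpo (n + 1) (dp n b) :=
    eq_neg_of_add_eq_zero_left (hd0dpo n b)
  rw [map_sub, hΔx, hdb, hb, sub_neg_eq_add, neg_add_cancel]

theorem exists_cycle_dpo_sub_eq {n : ℤ} {b b' : Cp n} (hb : dp n b = dp n b') :
    ∃ c : Cp n, dp n c = 0 ∧ dpo n b' - dpo n b = dpo n c :=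
  ⟨b' - b, by rw [map_sub, hb, sub_self], (map_sub _ _ _).symm⟩

theorem exists_cycle_Δpo_add_dp_sub_eq
    (hΔpo : ∀ n (x : Cp (n + 1)),
      Δpo (n + 1) (dp (n + 1) x) + (d0 n (Δpo n x) + dpo n (Δp n x)) = 0)
    (hΔp : ∀ n (x : Cp (n + 1)), Δp (n + 1) (dp (n + 1) x) + dp n (Δp n x) = 0)
    {n : ℤ} (x : Cp (n + 1 + 1)) (y : Cp (n + 1)) {b b' : Cp n}
    (hb : dp n b = Δp (n + 1) x) (hb' : dp n b' = Δp (n + 1) (x + dp (n + 1) y)) :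
    ∃ (c : Cp n) (e : C0 n), dp n c = 0 ∧
      (Δpo (n + 1) (x + dp (n + 1) y) - dpo n b') - (Δpo (n + 1) x - dpo n b) =
        dpo n c + d0 n e := by
  have hΔy : Δp (n + 1) (dp (n + 1) y) = -dp n (Δp n y) := eq_neg_of_add_eq_zero_left (hΔp n y)
  have hΔpoy : Δpo (n + 1) (dp (n + 1) y) = -(d0 n (Δpo n y) + dpo n (Δp n y)) :=
    eq_neg_of_add_eq_zero_left (hΔpo n y)
  refine ⟨b - b' - Δp n y, -Δpo n y, ?_, ?_⟩
  · rw [map_sub, map_sub, hb, hb', map_add, hΔy]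
    abel
  · simp only [map_add, map_sub, map_neg, hΔpoy]
    abel

end StructureMap

/-- The graded complex is `C n = C0 n × Cp n` with differential
`d (a,x) = (d0 a + dpo x, dp x)` of degree `1` and BV-type operator
`Δ (a,x) = (Δpo x, Δp x)` of degree `-1` (indexed here by target degree). -/
theorem stmt0 {R : Type*} [CommRing R] {C0 Cp : ℤ → Type*}
    [∀ n, AddCommGroup (C0 n)] [∀ n, Module R (C0 n)]
    [∀ n, AddCommGroup (Cp n)] [∀ n, Module R (Cp n)]
    (d0 : ∀ n, C0 n →ₗ[R] C0 (n + 1)) (dp : ∀ n, Cp n →ₗ[R] Cp (n + 1))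
    (dpo : ∀ n, Cp n →ₗ[R] C0 (n + 1))
    (Δp : ∀ n, Cp (n + 1) →ₗ[R] Cp n) (Δpo : ∀ n, Cp (n + 1) →ₗ[R] C0 n)
    -- `d ∘ d = 0` on the full complex `C0 ⊕ Cp`:
    (hdd : ∀ (n : ℤ) (a : C0 n) (x : Cp n),
      d0 (n + 1) (d0 n a + dpo n x) + dpo (n + 1) (dp n x) = 0 ∧
      dp (n + 1) (dp n x) = 0)
    -- `Δ ∘ d + d ∘ Δ = 0` on the full complex:
    (hΔd : ∀ (n : ℤ) (x : Cp (n + 1)),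
      Δpo (n + 1) (dp (n + 1) x) + (d0 n (Δpo n x) + dpo n (Δp n x)) = 0 ∧
      Δp (n + 1) (dp (n + 1) x) + dp n (Δp n x) = 0) :
    ∀ (n : ℤ) (x : Cp (n + 1 + 1)) (b : Cp n),
      dp (n + 1 + 1) x = 0 → dp n b = Δp (n + 1) x →
      -- (i) the representative is `d0`-closed:
      (d0 (n + 1) (Δpo (n + 1) x - dpo n b) = 0) ∧
      -- (ii) independence of the choice of `b`, modulo `im d0 + d₊₀(ker d₊)`:
      (∀ b' : Cp n, dp n b' = Δp (n + 1) x →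
        ∃ (c : Cp n) (e : C0 n), dp n c = 0 ∧
          (Δpo (n + 1) x - dpo n b) - (Δpo (n + 1) x - dpo n b') = dpo n c + d0 n e) ∧
      -- (iii) changing `x` by `d₊ y` changes the representative by an element of
      -- `im d0 + d₊₀(ker d₊)`:
      (∀ (y : Cp (n + 1)) (b' : Cp n), dp n b' = Δp (n + 1) (x + dp (n + 1) y) →
        ∃ (c : Cp n) (e : C0 n), dp n c = 0 ∧
          (Δpo (n + 1) (x + dp (n + 1) y) - dpo n b') - (Δpo (n + 1) x - dpo n b) =
            dpo n c + d0 n e) := by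
  intro n x b hx hb
  have hd0dpo : ∀ n (x : Cp n), d0 (n + 1) (dpo n x) + dpo (n + 1) (dp n x) = 0 := fun n x => by
    simpa using (hdd n 0 x).1
  have hΔpo := fun n x => (hΔd n x).1
  have hΔp := fun n x => (hΔd n x).2
  refine ⟨d0_Δpo_sub_dpo_eq_zero d0 dp dpo Δp Δpo hd0dpo hΔpo hx hb, fun b' hb' => ?_,
    fun y b' hb' => exists_cycle_Δpo_add_dp_sub_eq d0 dp dpo Δp Δpo hΔpo hΔp x y hb hb'⟩
  obtain ⟨c, hc, hdiff⟩ := exists_cycle_dpo_sub_eq dp dpo (hb.trans hb'.symm)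
  exact ⟨c, 0, hc, by rw [sub_sub_sub_cancel_left, hdiff, map_zero, add_zero]⟩
end

section
/- In the setting of the previous statement, suppose additionally $\psi = \psi_+ + \psi_0 + \psi_{+,0}$ is a degree $0$ map with $\psi \circ d = d \circ \psi$ (where $\psi_+ : C_+ \to C_+$, $\psi_0 : C_0 \to C_0$, $\psi_{+,0} : C_+ \to C_0$), and suppose there is a map $\eta = \eta_+ + \eta_{+,0}$ of degree $-2$ such that $\Delta \circ \psi - \psi \circ \Delta = \eta \circ d - d \circ \eta$. Then on cohomology, $\phi \circ \psi_+ = \psi_0 \circ \phi$ as maps $\ker \Delta_+ \subset H^*(C_+, d_+) \to \operatorname{coker}\delta$. -/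
/-!
For a `d₊`-cycle `x` with `Δ₊ x = d₊ b` and `Δ₊ (ψ₊ x) = d₊ b'`, the homotopy `η` makes
`c = η₊ x - ψ₊ b + b'` a `d₊`-cycle, and `e = η₊₀ x - ψ₊₀ b` then exhibits the difference of
the two representatives `ψ₀ (φ x)` and `φ (ψ₊ x)` as `d₊₀ c + d₀ e`, i.e. as zero in `coker δ`.
-/

theorem stmt1_general {R : Type*} [CommRing R] {C0 Cp : ℤ → Type*}
    [∀ n, AddCommGroup (C0 n)] [∀ n, Module R (C0 n)]
    [∀ n, AddCommGroup (Cp n)] [∀ n, Module R (Cp n)]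
    (d0 : ∀ n, C0 n →ₗ[R] C0 (n + 1)) (dp : ∀ n, Cp n →ₗ[R] Cp (n + 1))
    (dpo : ∀ n, Cp n →ₗ[R] C0 (n + 1))
    (Δp : ∀ n, Cp (n + 1) →ₗ[R] Cp n) (Δpo : ∀ n, Cp (n + 1) →ₗ[R] C0 n)
    (ψ0 : ∀ n, C0 n →ₗ[R] C0 n) (ψp : ∀ n, Cp n →ₗ[R] Cp n)
    (ψpo : ∀ n, Cp n →ₗ[R] C0 n)
    (ηp : ∀ n, Cp (n + 1 + 1) →ₗ[R] Cp n) (ηpo : ∀ n, Cp (n + 1 + 1) →ₗ[R] C0 n)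
    -- `ψ ∘ d = d ∘ ψ` on the full complex:
    (hψd : ∀ (n : ℤ) (a : C0 n) (x : Cp n),
      ψ0 (n + 1) (d0 n a + dpo n x) + ψpo (n + 1) (dp n x) =
        d0 n (ψ0 n a + ψpo n x) + dpo n (ψp n x) ∧
      ψp (n + 1) (dp n x) = dp n (ψp n x))
    -- `Δ ∘ ψ - ψ ∘ Δ = η ∘ d - d ∘ η` on the full complex:
    (hΔψ : ∀ (n : ℤ) (x : Cp (n + 1 + 1)),
      Δpo (n + 1) (ψp (n + 1 + 1) x) -
          (ψ0 (n + 1) (Δpo (n + 1) x) + ψpo (n + 1) (Δp (n + 1) x)) =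
        ηpo (n + 1) (dp (n + 1 + 1) x) - (d0 n (ηpo n x) + dpo n (ηp n x)) ∧
      Δp (n + 1) (ψp (n + 1 + 1) x) - ψp (n + 1) (Δp (n + 1) x) =
        ηp (n + 1) (dp (n + 1 + 1) x) - dp n (ηp n x)) :
    -- conclusion: `φ(ψ₊ x) = ψ₀(φ x)` in `coker δ`:
    ∀ (n : ℤ) (x : Cp (n + 1 + 1)) (b b' : Cp n),
      dp (n + 1 + 1) x = 0 → dp n b = Δp (n + 1) x →
      dp n b' = Δp (n + 1) (ψp (n + 1 + 1) x) →
      ∃ (c : Cp n) (e : C0 n), dp n c = 0 ∧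
        ψ0 (n + 1) (Δpo (n + 1) x - dpo n b) -
            (Δpo (n + 1) (ψp (n + 1 + 1) x) - dpo n b') = dpo n c + d0 n e := by
  intro n x b b' hx hb hb'
  obtain ⟨homotopy_po, homotopy_p⟩ := hΔψ n x
  rw [hx, map_zero, zero_sub] at homotopy_po homotopy_p
  have chain_p : ψp (n + 1) (Δp (n + 1) x) = dp n (ψp n b) := by
    rw [← hb, (hψd n 0 b).2]
  have chain_po : ψ0 (n + 1) (dpo n b) + ψpo (n + 1) (Δp (n + 1) x) =
      d0 n (ψpo n b) + dpo n (ψp n b) := by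
    simpa only [map_zero, zero_add, add_zero, hb] using (hψd n 0 b).1
  refine ⟨ηp n x - ψp n b + b', ηpo n x - ψpo n b, ?_, ?_⟩
  · simp only [map_add, map_sub]
    linear_combination (norm := module) homotopy_p + chain_p + hb'
  · simp only [map_add, map_sub]
    linear_combination (norm := module) -homotopy_po - chain_po

/-- Proposition 4.2 (second part): if `ψ = ψ₊ + ψ₀ + ψ₊₀` is a degree-0 chain map and
`η = η₊ + η₊₀` is a degree `-2` map with `Δ ∘ ψ - ψ ∘ Δ = η ∘ d - d ∘ η`, then on
cohomology `φ ∘ ψ₊ = ψ₀ ∘ φ` on `ker Δ₊ ⊆ H^*(C₊, d₊)` with values in `coker δ`. -/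
theorem stmt1 {R : Type*} [CommRing R] {C0 Cp : ℤ → Type*}
    [∀ n, AddCommGroup (C0 n)] [∀ n, Module R (C0 n)]
    [∀ n, AddCommGroup (Cp n)] [∀ n, Module R (Cp n)]
    (d0 : ∀ n, C0 n →ₗ[R] C0 (n + 1)) (dp : ∀ n, Cp n →ₗ[R] Cp (n + 1))
    (dpo : ∀ n, Cp n →ₗ[R] C0 (n + 1))
    (Δp : ∀ n, Cp (n + 1) →ₗ[R] Cp n) (Δpo : ∀ n, Cp (n + 1) →ₗ[R] C0 n)
    (ψ0 : ∀ n, C0 n →ₗ[R] C0 n) (ψp : ∀ n, Cp n →ₗ[R] Cp n)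
    (ψpo : ∀ n, Cp n →ₗ[R] C0 n)
    (ηp : ∀ n, Cp (n + 1 + 1) →ₗ[R] Cp n) (ηpo : ∀ n, Cp (n + 1 + 1) →ₗ[R] C0 n)
    -- `d ∘ d = 0` on the full complex `C0 ⊕ Cp`:
    (hdd : ∀ (n : ℤ) (a : C0 n) (x : Cp n),
      d0 (n + 1) (d0 n a + dpo n x) + dpo (n + 1) (dp n x) = 0 ∧
      dp (n + 1) (dp n x) = 0)
    -- `Δ ∘ d + d ∘ Δ = 0` on the full complex:
    (hΔd : ∀ (n : ℤ) (x : Cp (n + 1)),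
      Δpo (n + 1) (dp (n + 1) x) + (d0 n (Δpo n x) + dpo n (Δp n x)) = 0 ∧
      Δp (n + 1) (dp (n + 1) x) + dp n (Δp n x) = 0)
    -- `ψ ∘ d = d ∘ ψ` on the full complex:
    (hψd : ∀ (n : ℤ) (a : C0 n) (x : Cp n),
      ψ0 (n + 1) (d0 n a + dpo n x) + ψpo (n + 1) (dp n x) =
        d0 n (ψ0 n a + ψpo n x) + dpo n (ψp n x) ∧
      ψp (n + 1) (dp n x) = dp n (ψp n x))
    -- `Δ ∘ ψ - ψ ∘ Δ = η ∘ d - d ∘ η` on the full complex: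
    (hΔψ : ∀ (n : ℤ) (x : Cp (n + 1 + 1)),
      Δpo (n + 1) (ψp (n + 1 + 1) x) -
          (ψ0 (n + 1) (Δpo (n + 1) x) + ψpo (n + 1) (Δp (n + 1) x)) =
        ηpo (n + 1) (dp (n + 1 + 1) x) - (d0 n (ηpo n x) + dpo n (ηp n x)) ∧
      Δp (n + 1) (ψp (n + 1 + 1) x) - ψp (n + 1) (Δp (n + 1) x) =
        ηp (n + 1) (dp (n + 1 + 1) x) - dp n (ηp n x)) :
    -- conclusion: `φ(ψ₊ x) = ψ₀(φ x)` in `coker δ`: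
    ∀ (n : ℤ) (x : Cp (n + 1 + 1)) (b b' : Cp n),
      dp (n + 1 + 1) x = 0 → dp n b = Δp (n + 1) x →
      dp n b' = Δp (n + 1) (ψp (n + 1 + 1) x) →
      ∃ (c : Cp n) (e : C0 n), dp n c = 0 ∧
        ψ0 (n + 1) (Δpo (n + 1) x - dpo n b) -
            (Δpo (n + 1) (ψp (n + 1 + 1) x) - dpo n b') = dpo n c + d0 n e :=
  stmt1_general d0 dp dpo Δp Δpo ψ0 ψp ψpo ηp ηpo hψd hΔψ
end
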